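/- arXiv:1405.6305 — 4 statements merged into one kernel-verified Lean document; each statement's English description precedes it below -/
import Mathlib

section
/- For every θ > 0 and every bounded measurable 2π-periodic function f : ℝ → ℂ, lim_{t → ∞} ∫_0^∞ f(x) · (θ^t / Γ(t)) · x^{t−1} e^{−θx} dx = (1/(2π)) ∫_0^{2π} f(y) dy; that is, the Gamma(t, θ) law taken modulo 2π converges to the uniform law on [0, 2π) as the shape parameter t → ∞. -/
/-!
Split `(0, ∞)` into the periods `(kT, kT + T]`. For a `T`-periodic `f` of mean zero, the integral
of `p • f` over one period does not change when `p` is replaced by `p` minus its value at the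
right endpoint, so it is at most `T ‖f‖∞` times the variation of `p` on that period; summing,
`‖∫ p • f‖ ≤ T ‖f‖∞ Var(p)`. The Gamma(t, θ) density is unimodal, so its variation is at most
twice its value at the mode `(t - 1)/θ`. On `[t - 1, t - 1 + √(t - 1)]` the integrand of `Γ(t)`
stays above `1/e` times its maximum, whence `Γ(t) ≥ √(t - 1) ((t - 1)/e)^(t - 1) / e` and the
value at the mode is `O(1/√t)`.
-/

open MeasureTheory Filter Real Set ProbabilityTheory

section Variation

variable {α : Type*} [LinearOrder α]

lemma eVariationOn_neg (f : α → ℝ) (s : Set α) : eVariationOn (-f) s = eVariationOn f s := by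
  simp [eVariationOn, edist_neg_neg]

lemma AntitoneOn.eVariationOn_le_of_nonneg {f : α → ℝ} {s : Set α} {m : α} (hf : AntitoneOn f s)
    (hm : IsLeast s m) (h0 : ∀ x ∈ s, 0 ≤ f x) : eVariationOn f s ≤ ENNReal.ofReal (f m) := by
  rw [eVariationOn.eq_biSup_inter_Icc]
  refine iSup₂_le fun ⟨x, y⟩ ⟨hx, hy, _⟩ => ?_
  rw [← eVariationOn_neg, MonotoneOn.eVariationOn_eq (f := -f) hf.neg hx hy]
  rw [Pi.neg_apply, Pi.neg_apply]
  exact ENNReal.ofReal_le_ofReal (by linarith [h0 y hy, hf hm.1 hx (hm.2 hx)])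

lemma eVariationOn_Ici_le_of_unimodal {f : α → ℝ} {a m : α} (ham : a ≤ m)
    (hmono : MonotoneOn f (Icc a m)) (hanti : AntitoneOn f (Ici m)) (h0 : ∀ x ∈ Ici a, 0 ≤ f x) :
    eVariationOn f (Ici a) ≤ ENNReal.ofReal (2 * f m) := by
  have hsplit : Ici a = Icc a m ∪ Ici m := (Icc_union_Ici_eq_Ici ham).symm
  rw [hsplit, eVariationOn.union f (isGreatest_Icc ham) isLeast_Ici, two_mul,
    ENNReal.ofReal_add (h0 m ham) (h0 m ham)]
  gcongr
  · rw [← inter_self (Icc a m), hmono.eVariationOn_eq (left_mem_Icc.2 ham) (right_mem_Icc.2 ham)]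
    exact ENNReal.ofReal_le_ofReal (by linarith [h0 a le_rfl])
  · exact hanti.eVariationOn_le_of_nonneg isLeast_Ici fun x hx => h0 x (ham.trans hx)

end Variation

section Periodic

variable {E : Type*} [NormedAddCommGroup E] [NormedSpace ℝ E] {T M : ℝ} {f : ℝ → E} {p : ℝ → ℝ}

lemma iUnion_Ioc_nat_mul_eq_Ioi (hT : 0 < T) : ⋃ k : ℕ, Ioc (k * T) (k * T + T) = Ioi 0 := by
  have hunb : ¬BddAbove (range fun k : ℕ => (k : ℝ) * T) :=
    not_bddAbove_of_tendsto_atTop (tendsto_natCast_atTop_atTop.atTop_mul_const hT)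
  simpa [add_mul] using iUnion_Ioc_map_succ_eq_Ioi (f := fun k : ℕ => (k : ℝ) * T)
    (fun k => (Nat.mono_cast.mul_const hT.le) bot_le) hunb

lemma norm_setIntegral_Ioc_smul_le_of_periodic (hT : 0 < T) (hf_meas : AEStronglyMeasurable f)
    (hf_bdd : ∀ x, ‖f x‖ ≤ M) (hf_per : Function.Periodic f T) (hf_mean : ∫ x in 0..T, f x = 0)
    {a : ℝ} (hp_int : IntegrableOn p (Ioc a (a + T)))
    (hp_var : BoundedVariationOn p (Icc a (a + T))) :
    ‖∫ x in Ioc a (a + T), p x • f x‖ ≤ T * M * (eVariationOn p (Icc a (a + T))).toReal := by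
  have hf_int : IntegrableOn f (Ioc a (a + T)) :=
    Measure.integrableOn_of_bounded (by simp) hf_meas (ae_of_all _ hf_bdd)
  have hzero : ∫ x in Ioc a (a + T), f x = 0 := by
    rw [← intervalIntegral.integral_of_le (by linarith), hf_per.intervalIntegral_add_eq a 0,
      zero_add, hf_mean]
  have hshift :
      ∫ x in Ioc a (a + T), p x • f x = ∫ x in Ioc a (a + T), (p x - p (a + T)) • f x := by
    have hpf_int : IntegrableOn (fun x => p x • f x) (Ioc a (a + T)) :=
      hp_int.smul_bdd M hf_meas.restrict (ae_of_all _ hf_bdd)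
    have hcf_int : IntegrableOn (fun x => p (a + T) • f x) (Ioc a (a + T)) := hf_int.smul _
    simp_rw [sub_smul]
    rw [integral_sub hpf_int hcf_int, integral_smul, hzero, smul_zero, sub_zero]
  rw [hshift]
  calc ‖∫ x in Ioc a (a + T), (p x - p (a + T)) • f x‖
      ≤ (eVariationOn p (Icc a (a + T))).toReal * M * volume.real (Ioc a (a + T)) := by
        refine norm_setIntegral_le_of_norm_le_const (by simp) fun x hx => ?_
        rw [norm_smul, Real.norm_eq_abs, ← Real.dist_eq]
        exact mul_le_mul (hp_var.dist_le (Ioc_subset_Icc_self hx) (right_mem_Icc.2 (by linarith)))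
          (hf_bdd x) (norm_nonneg _) ENNReal.toReal_nonneg
    _ = T * M * (eVariationOn p (Icc a (a + T))).toReal := by
        rw [Real.volume_real_Ioc_of_le (by linarith)]
        ring

theorem norm_setIntegral_Ioi_smul_le_of_periodic (hT : 0 < T) (hf_meas : AEStronglyMeasurable f)
    (hf_bdd : ∀ x, ‖f x‖ ≤ M) (hf_per : Function.Periodic f T) (hf_mean : ∫ x in 0..T, f x = 0)
    (hp_int : IntegrableOn p (Ioi 0)) (hp_var : BoundedVariationOn p (Ici 0)) :
    ‖∫ x in Ioi 0, p x • f x‖ ≤ T * M * (eVariationOn p (Ici 0)).toReal := by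
  have hM : 0 ≤ M := (norm_nonneg _).trans (hf_bdd 0)
  have hI : Monotone fun k : ℕ => (k : ℝ) * T := Nat.mono_cast.mul_const hT.le
  have hIoc_sub : ∀ k : ℕ, Ioc (k * T) (k * T + T) ⊆ Ioi 0 := fun k =>
    (iUnion_Ioc_nat_mul_eq_Ioi hT).le.trans' (subset_iUnion_of_subset k le_rfl)
  have hIcc_sub : ∀ k : ℕ, Icc (k * T) (k * T + T) ⊆ Ici 0 := fun k =>
    (Icc_subset_Ici_iff (by linarith)).2 (by positivity)
  set v : ℕ → ENNReal := fun k => eVariationOn p (Icc (k * T) (k * T + T))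
  have hv_ne_top : ∀ k, v k ≠ ⊤ := fun k => hp_var.mono (hIcc_sub k)
  have hv_sum : ∑' k, v k ≤ eVariationOn p (Ici 0) := by
    refine ENNReal.tsum_le_of_sum_range_le fun n => ?_
    have := eVariationOn.sum' p hI (n := n)
    simp only [Nat.cast_add, Nat.cast_one, add_mul, one_mul, Nat.cast_zero, zero_mul] at this
    rw [this]
    exact eVariationOn.mono p Icc_subset_Ici_self
  have hpf_int : IntegrableOn (fun x => p x • f x) (Ioi 0) :=
    hp_int.smul_bdd M hf_meas.restrict (ae_of_all _ hf_bdd)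
  have hsum : HasSum (fun k : ℕ => ∫ x in Ioc (k * T) (k * T + T), p x • f x)
      (∫ x in Ioi 0, p x • f x) := by
    rw [← iUnion_Ioc_nat_mul_eq_Ioi hT] at hpf_int ⊢
    exact hasSum_integral_iUnion (fun k => measurableSet_Ioc)
      (hI.pairwise_disjoint_on_Ioc_succ.mono fun i j h => by simpa [add_mul] using h) hpf_int
  have hv_real : HasSum (fun k => T * M * (v k).toReal) (T * M * (∑' k, v k).toReal) := by
    rw [ENNReal.tsum_toReal_eq hv_ne_top]
    exact (ENNReal.summable_toReal (ne_top_of_le_ne_top hp_var hv_sum)).hasSum.mul_left _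
  calc ‖∫ x in Ioi 0, p x • f x‖ ≤ T * M * (∑' k, v k).toReal :=
        hsum.norm_le_of_bounded hv_real fun k =>
          norm_setIntegral_Ioc_smul_le_of_periodic hT hf_meas hf_bdd hf_per hf_mean
            (hp_int.mono_set (hIoc_sub k)) (hv_ne_top k)
    _ ≤ T * M * (eVariationOn p (Ici 0)).toReal := by
        gcongr

theorem norm_setIntegral_Ioi_smul_sub_average_le_of_periodic [CompleteSpace E] (hT : 0 < T)
    (hf_meas : AEStronglyMeasurable f) (hf_bdd : ∀ x, ‖f x‖ ≤ M) (hf_per : Function.Periodic f T)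
    (hp_int : IntegrableOn p (Ioi 0)) (hp_one : ∫ x in Ioi 0, p x = 1)
    (hp_var : BoundedVariationOn p (Ici 0)) :
    ‖(∫ x in Ioi 0, p x • f x) - (1 / T) • ∫ x in 0..T, f x‖ ≤
      T * (2 * M) * (eVariationOn p (Ici 0)).toReal := by
  set A := (1 / T) • ∫ x in 0..T, f x
  have hA : ‖A‖ ≤ M := by
    have hint := intervalIntegral.norm_integral_le_of_norm_le_const (a := 0) (b := T)
      fun x _ => hf_bdd x
    rw [sub_zero, abs_of_pos hT] at hint
    calc ‖A‖ = 1 / T * ‖∫ x in 0..T, f x‖ := by rw [norm_smul, Real.norm_of_nonneg (by positivity)]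
      _ ≤ 1 / T * (M * T) := by gcongr
      _ = M := by field_simp
  have hf_int : IntervalIntegrable f volume 0 T :=
    (Measure.integrableOn_of_bounded (by simp) hf_meas (ae_of_all _ hf_bdd)).intervalIntegrable
  have hmean : ∫ x in 0..T, (f x - A) = 0 := by
    rw [intervalIntegral.integral_sub hf_int intervalIntegrable_const,
      intervalIntegral.integral_const, sub_zero, smul_smul, mul_one_div_cancel hT.ne', one_smul,
      sub_self]
  have hpf_int : IntegrableOn (fun x => p x • f x) (Ioi 0) :=
    hp_int.smul_bdd M hf_meas.restrict (ae_of_all _ hf_bdd)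
  have hpA_int : IntegrableOn (fun x => p x • A) (Ioi 0) := hp_int.smul_const A
  have hcentre : ∫ x in Ioi 0, p x • (f x - A) = (∫ x in Ioi 0, p x • f x) - A := by
    simp_rw [smul_sub]
    rw [integral_sub hpf_int hpA_int, integral_smul_const, hp_one, one_smul]
  rw [← hcentre]
  exact norm_setIntegral_Ioi_smul_le_of_periodic hT (hf_meas.sub aestronglyMeasurable_const)
    (fun x => (norm_sub_le _ _).trans (by linarith [hf_bdd x]))
    (fun x => by simp only [hf_per x]) hmean hp_int hp_var

end Periodic

section RpowMulExp

variable {m θ : ℝ}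

lemma hasDerivAt_rpow_mul_exp_neg_mul {x : ℝ} (hx : 0 < x) :
    HasDerivAt (fun y => y ^ m * exp (-(θ * y)))
      (x ^ (m - 1) * exp (-(θ * x)) * (m - θ * x)) x := by
  have hpow := Real.hasDerivAt_rpow_const (p := m) (Or.inl hx.ne')
  have hlin : HasDerivAt (fun y => -(θ * y)) (-θ) x := by
    simpa [neg_mul] using (hasDerivAt_id' x).const_mul (-θ)
  refine (hpow.mul hlin.exp).congr_deriv ?_
  rw [show x ^ m = x ^ (m - 1) * x by rw [← rpow_add_one hx.ne']; ring_nf]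
  ring

lemma continuousOn_rpow_mul_exp_neg_mul (hm : 0 < m) :
    ContinuousOn (fun y => y ^ m * exp (-(θ * y))) (Ici 0) :=
  ((continuous_rpow_const hm.le).mul (by fun_prop)).continuousOn

lemma monotoneOn_rpow_mul_exp_neg_mul (hm : 0 < m) (hθ : 0 < θ) :
    MonotoneOn (fun x => x ^ m * exp (-(θ * x))) (Icc 0 (m / θ)) := by
  refine monotoneOn_of_hasDerivWithinAt_nonneg (convex_Icc _ _)
    ((continuousOn_rpow_mul_exp_neg_mul hm).mono Icc_subset_Ici_self)
    (fun x hx => by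
      rw [interior_Icc] at hx
      exact (hasDerivAt_rpow_mul_exp_neg_mul hx.1).hasDerivWithinAt)
    fun x hx => ?_
  rw [interior_Icc] at hx
  have hsign : 0 ≤ m - θ * x := by
    have := (le_div_iff₀' hθ).1 hx.2.le
    linarith
  have := rpow_pos_of_pos hx.1 (m - 1)
  positivity

lemma antitoneOn_rpow_mul_exp_neg_mul (hm : 0 < m) (hθ : 0 < θ) :
    AntitoneOn (fun x => x ^ m * exp (-(θ * x))) (Ici (m / θ)) := by
  have hmode : 0 < m / θ := div_pos hm hθ
  refine antitoneOn_of_hasDerivWithinAt_nonpos (convex_Ici _)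
    ((continuousOn_rpow_mul_exp_neg_mul hm).mono (Ici_subset_Ici.2 hmode.le))
    (fun x hx => by
      rw [interior_Ici] at hx
      exact (hasDerivAt_rpow_mul_exp_neg_mul (hmode.trans hx)).hasDerivWithinAt)
    fun x hx => ?_
  rw [interior_Ici] at hx
  have hsign : m - θ * x ≤ 0 := by
    have := (div_le_iff₀' hθ).1 hx.le
    linarith
  have := rpow_pos_of_pos (hmode.trans hx) (m - 1)
  exact mul_nonpos_of_nonneg_of_nonpos (by positivity) hsign

lemma rpow_self_mul_exp_neg_mul_exp_le_rpow_mul_exp_neg {x : ℝ} (hm : 0 < m) (hx : 0 < x) :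
    m ^ m * exp (-m) * exp (-((x - m) ^ 2 / x)) ≤ x ^ m * exp (-x) := by
  have hlog : 1 - (x / m)⁻¹ ≤ log (x / m) := one_sub_inv_le_log_of_pos (by positivity)
  rw [log_div hx.ne' hm.ne', inv_div] at hlog
  rw [rpow_def_of_pos hm, rpow_def_of_pos hx, ← exp_add, ← exp_add, ← exp_add, exp_le_exp]
  have hident : m * (1 - m / x) = x - m - (x - m) ^ 2 / x := by field_simp; ring
  nlinarith [mul_le_mul_of_nonneg_left hlog hm.le]

end RpowMulExp

lemma sqrt_mul_rpow_mul_exp_neg_le_Gamma {t : ℝ} (ht : 1 < t) :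
    √(t - 1) * ((t - 1) ^ (t - 1) * exp (-(t - 1)) * exp (-1)) ≤ Gamma t := by
  set m := t - 1
  have hm : 0 < m := sub_pos.2 ht
  have hlower : ∀ x ∈ Icc m (m + √m), m ^ m * exp (-m) * exp (-1) ≤ exp (-x) * x ^ m := by
    rintro x ⟨hmx, hxm⟩
    have hx : 0 < x := hm.trans_le hmx
    have hsq : (x - m) ^ 2 ≤ x :=
      calc (x - m) ^ 2 ≤ √m ^ 2 := pow_le_pow_left₀ (by linarith) (by linarith) 2
        _ = m := sq_sqrt hm.le
        _ ≤ x := hmx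
    calc m ^ m * exp (-m) * exp (-1) ≤ m ^ m * exp (-m) * exp (-((x - m) ^ 2 / x)) := by
          gcongr
          exact (div_le_one hx).2 hsq
      _ ≤ exp (-x) * x ^ m := by
          rw [mul_comm (exp _)]
          exact rpow_self_mul_exp_neg_mul_exp_le_rpow_mul_exp_neg hm hx
  have hint := GammaIntegral_convergent (zero_lt_one.trans ht)
  rw [Gamma_eq_integral (zero_lt_one.trans ht)]
  calc √m * (m ^ m * exp (-m) * exp (-1))
      = (m ^ m * exp (-m) * exp (-1)) * volume.real (Icc m (m + √m)) := by
        rw [Real.volume_real_Icc_of_le (by linarith [sqrt_nonneg m]), add_sub_cancel_left, mul_comm]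
    _ ≤ ∫ x in Icc m (m + √m), exp (-x) * x ^ (t - 1) :=
        setIntegral_ge_of_const_le_real measurableSet_Icc (by simp) hlower
          (hint.mono_set fun x hx => hm.trans_le hx.1)
    _ ≤ ∫ x in Ioi 0, exp (-x) * x ^ (t - 1) :=
        setIntegral_mono_set hint
          ((ae_restrict_iff' measurableSet_Ioi).2 (ae_of_all _ fun x hx => by
            have := rpow_nonneg (le_of_lt hx) (t - 1); positivity))
          (ae_of_all _ fun x hx => hm.trans_le hx.1)

section GammaPDF

variable {t θ : ℝ}

lemma gammaPDFReal_of_nonneg {x : ℝ} (hx : 0 ≤ x) :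
    gammaPDFReal t θ x = θ ^ t / Gamma t * (x ^ (t - 1) * exp (-(θ * x))) := by
  rw [gammaPDFReal, if_pos hx, mul_assoc]

lemma setIntegral_gammaPDFReal_Ioi (ht : 0 < t) (hθ : 0 < θ) :
    ∫ x in Ioi 0, gammaPDFReal t θ x = 1 := by
  rw [setIntegral_congr_fun measurableSet_Ioi fun x hx => gammaPDFReal_of_nonneg (le_of_lt hx),
    integral_const_mul, integral_rpow_mul_exp_neg_mul_Ioi ht hθ, div_rpow zero_le_one hθ.le,
    one_rpow]
  have := (Gamma_pos_of_pos ht).ne'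
  have := (rpow_pos_of_pos hθ t).ne'
  field_simp

lemma integrableOn_gammaPDFReal_Ioi (ht : 0 < t) (hθ : 0 < θ) :
    IntegrableOn (gammaPDFReal t θ) (Ioi 0) :=
  Integrable.of_integral_ne_zero (by rw [setIntegral_gammaPDFReal_Ioi ht hθ]; exact one_ne_zero)

lemma eVariationOn_gammaPDFReal_le (ht : 1 < t) (hθ : 0 < θ) :
    eVariationOn (gammaPDFReal t θ) (Ici 0) ≤
      ENNReal.ofReal (2 * gammaPDFReal t θ ((t - 1) / θ)) := by
  have hc : 0 ≤ θ ^ t / Gamma t := by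
    have := Gamma_pos_of_pos (zero_lt_one.trans ht); positivity
  have hmode : 0 ≤ (t - 1) / θ := div_nonneg (by linarith) hθ.le
  refine eVariationOn_Ici_le_of_unimodal hmode (fun x hx y hy hxy => ?_) (fun x hx y hy hxy => ?_)
    fun x _ => gammaPDFReal_nonneg (zero_lt_one.trans ht) hθ x
  · rw [gammaPDFReal_of_nonneg hx.1, gammaPDFReal_of_nonneg hy.1]
    exact mul_le_mul_of_nonneg_left (monotoneOn_rpow_mul_exp_neg_mul (by linarith) hθ hx hy hxy) hc
  · rw [gammaPDFReal_of_nonneg (hmode.trans hx), gammaPDFReal_of_nonneg (hmode.trans hy)]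
    exact mul_le_mul_of_nonneg_left (antitoneOn_rpow_mul_exp_neg_mul (by linarith) hθ hx hy hxy) hc

lemma gammaPDFReal_mode_le (ht : 1 < t) (hθ : 0 < θ) :
    gammaPDFReal t θ ((t - 1) / θ) ≤ θ * exp 1 / √(t - 1) := by
  have hm : 0 < t - 1 := sub_pos.2 ht
  have hΓ := sqrt_mul_rpow_mul_exp_neg_le_Gamma ht
  have hΓpos := Gamma_pos_of_pos (zero_lt_one.trans ht)
  have hθt : θ ^ t = θ * θ ^ (t - 1) := by
    rw [← rpow_one_add' hθ.le (by linarith), add_sub_cancel]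
  have hX : 0 < (t - 1) ^ (t - 1) * exp (-(t - 1)) := by
    have := rpow_pos_of_pos hm (t - 1); positivity
  have hsqrt : 0 < √(t - 1) := sqrt_pos.2 hm
  rw [gammaPDFReal_of_nonneg (div_nonneg hm.le hθ.le), div_rpow hm.le hθ.le,
    mul_div_cancel₀ _ hθ.ne']
  calc θ ^ t / Gamma t * ((t - 1) ^ (t - 1) / θ ^ (t - 1) * exp (-(t - 1)))
      = θ * ((t - 1) ^ (t - 1) * exp (-(t - 1))) / Gamma t := by
        have := (rpow_pos_of_pos hθ (t - 1)).ne'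
        rw [hθt]; field_simp
    _ ≤ θ * ((t - 1) ^ (t - 1) * exp (-(t - 1))) /
          (√(t - 1) * ((t - 1) ^ (t - 1) * exp (-(t - 1)) * exp (-1))) := by
        gcongr
    _ = θ * exp 1 / √(t - 1) := by
        field_simp
        rw [← exp_add, neg_add_cancel, exp_zero]

end GammaPDF

theorem norm_setIntegral_gammaPDFReal_smul_sub_average_le {E : Type*} [NormedAddCommGroup E]
    [NormedSpace ℝ E] [CompleteSpace E] {T M t θ : ℝ} {f : ℝ → E} (hT : 0 < T) (hθ : 0 < θ)
    (ht : 1 < t) (hf_meas : AEStronglyMeasurable f) (hf_bdd : ∀ x, ‖f x‖ ≤ M)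
    (hf_per : Function.Periodic f T) :
    ‖(∫ x in Ioi 0, gammaPDFReal t θ x • f x) - (1 / T) • ∫ x in 0..T, f x‖ ≤
      T * (2 * M) * (2 * (θ * exp 1 / √(t - 1))) := by
  have hM : 0 ≤ M := (norm_nonneg _).trans (hf_bdd 0)
  have hvar := eVariationOn_gammaPDFReal_le ht hθ
  refine (norm_setIntegral_Ioi_smul_sub_average_le_of_periodic hT hf_meas hf_bdd hf_per
    (integrableOn_gammaPDFReal_Ioi (by linarith) hθ) (setIntegral_gammaPDFReal_Ioi (by linarith) hθ)
    (ne_top_of_le_ne_top ENNReal.ofReal_ne_top hvar)).trans ?_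
  gcongr
  have hmode := gammaPDFReal_nonneg (zero_lt_one.trans ht) hθ ((t - 1) / θ)
  exact (ENNReal.toReal_le_of_le_ofReal (by positivity) hvar).trans
    (mul_le_mul_of_nonneg_left (gammaPDFReal_mode_le ht hθ) zero_le_two)

/-- The Gamma(t, θ) law taken modulo 2π converges to the uniform law on
`[0, 2π)` as the shape parameter `t → ∞`: for every bounded measurable
2π-periodic `f : ℝ → ℂ`, the Gamma averages of `f` converge to the uniform
average of `f` over one period. -/
theorem gamma_mod_two_pi_tendsto_uniform (θ : ℝ) (hθ : 0 < θ) (f : ℝ → ℂ)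
    (hf_meas : Measurable f) (hf_bdd : ∃ M : ℝ, ∀ x : ℝ, ‖f x‖ ≤ M)
    (hf_per : ∀ x : ℝ, f (x + 2 * Real.pi) = f x) :
    Tendsto
      (fun t : ℝ => ∫ x in Set.Ioi (0 : ℝ),
        f x * ((θ ^ t / Real.Gamma t * (x ^ (t - 1) * Real.exp (-θ * x)) : ℝ) : ℂ))
      atTop
      (nhds (((1 / (2 * Real.pi) : ℝ) : ℂ) *
        ∫ y in (0 : ℝ)..(2 * Real.pi), f y)) := by
  obtain ⟨M, hM⟩ := hf_bdd
  have hintegrand : ∀ t : ℝ, (∫ x in Ioi 0,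
      f x * ((θ ^ t / Gamma t * (x ^ (t - 1) * exp (-θ * x)) : ℝ) : ℂ)) =
      ∫ x in Ioi 0, gammaPDFReal t θ x • f x := fun t =>
    setIntegral_congr_fun measurableSet_Ioi fun x hx => by
      rw [gammaPDFReal_of_nonneg (le_of_lt hx), Complex.real_smul, mul_comm, neg_mul]
  simp_rw [hintegrand, ← Complex.real_smul]
  rw [tendsto_iff_norm_sub_tendsto_zero]
  have hsqrt : Tendsto (fun t : ℝ => √(t - 1)) atTop atTop :=
    tendsto_sqrt_atTop.comp (tendsto_atTop_add_const_right _ _ tendsto_id)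
  have hbound : Tendsto (fun t : ℝ => 2 * π * (2 * M) * (2 * (θ * exp 1 / √(t - 1)))) atTop
      (nhds 0) := by
    simpa using ((tendsto_const_nhds.div_atTop hsqrt).const_mul 2).const_mul (2 * π * (2 * M))
  refine squeeze_zero' (Eventually.of_forall fun _ => norm_nonneg _) ?_ hbound
  filter_upwards [eventually_gt_atTop 1] with t ht
  exact norm_setIntegral_gammaPDFReal_smul_sub_average_le (by positivity) hθ ht
    hf_meas.aestronglyMeasurable hM hf_per
end

section
/- For every θ > 0 and every y ∈ [0, 2π], the tail sum of the Gamma density sampled on the lattice 2πn + y satisfies lim_{t → ∞} (2π θ^t / Γ(t)) · Σ_{n=1}^∞ (2πn + y)^{t−1} e^{−θ(2πn + y)} = 1, where the limit is over real t → ∞. -/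
/-!
The summand is the kernel `g z = z ^ (t - 1) * exp (-θ z)`, which increases up to its peak
`m = (t - 1) / θ`, decreases after it, and has integral `Γ(t) / θ ^ t` over `(0, ∞)`. For a
unimodal function, a Riemann sum of mesh `2π` differs from the integral over `(y, ∞)` by at most
twice the mesh times the peak value. After normalising by `θ ^ t / Γ(t)` both errors vanish: the
missing piece `∫₀^y g ≤ y ^ t` contributes at most `(θ y) ^ t / Γ(t) → 0`, and since `g` stays
within a factor `e` of its peak on a window of width `√(t - 1) / θ` after `m`, the normalised peak
value is `O(1 / √t)`.
-/

open MeasureTheory Filter Real Set intervalIntegral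

section Unimodal

variable {f : ℝ → ℝ} {μ : ℝ}

lemma isMaxOn_Ici_of_monotoneOn_antitoneOn (hμ : 0 ≤ μ) (mono : MonotoneOn f (Icc 0 μ))
    (anti : AntitoneOn f (Ici μ)) : IsMaxOn f (Ici 0) μ := by
  intro x (hx : 0 ≤ x)
  rcases le_total x μ with h | h
  · exact mono ⟨hx, h⟩ ⟨hμ, le_rfl⟩ h
  · exact anti self_mem_Ici h h

lemma summable_of_antitoneOn_Ici (anti : AntitoneOn f (Ici μ))
    (nonneg : ∀ x, 0 ≤ x → 0 ≤ f x) (integrable : IntegrableOn f (Ioi 0)) :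
    Summable fun n : ℕ => f n :=
  (anti.mono (Ici_subset_Ici.2 (Nat.le_ceil μ))).summable_of_integrableOn_Ioi
    (integrable.mono_set (Ioi_subset_Ioi (Nat.cast_nonneg _)))
    fun x hx => nonneg x ((Nat.cast_nonneg _).trans (le_of_lt hx))

lemma tsum_le_integral_add_of_monotoneOn_antitoneOn (hμ : 0 ≤ μ)
    (mono : MonotoneOn f (Icc 0 μ)) (anti : AntitoneOn f (Ici μ))
    (nonneg : ∀ x, 0 ≤ x → 0 ≤ f x) (integrable : IntegrableOn f (Ioi 0)) :
    ∑' n : ℕ, f (n + 1) ≤ (∫ x in Ioi 0, f x) + 2 * f μ := by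
  set N := ⌊μ⌋₊
  have hNμ : (N : ℝ) ≤ μ := Nat.floor_le hμ
  have hμN : μ ≤ ((N + 1 : ℕ) : ℝ) := by push_cast; exact (Nat.lt_floor_add_one μ).le
  have peak : ∀ x, 0 ≤ x → f x ≤ f μ :=
    isMaxOn_iff.1 (isMaxOn_Ici_of_monotoneOn_antitoneOn hμ mono anti)
  have summable : Summable fun n : ℕ => f (n + 1) := by
    simpa using (summable_nat_add_iff 1).2 (summable_of_antitoneOn_Ici anti nonneg integrable)
  rw [← summable.sum_add_tsum_nat_add N]
  have head : ∑ i ∈ Finset.range N, f (i + 1) ≤ (∫ x in (0)..N, f x) + f μ := by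
    have h := (mono.mono (Icc_subset_Icc_right (by simpa using hNμ))).sum_le_integral (x₀ := 0)
    have shift := Finset.sum_range_succ' (fun i : ℕ => f i) N
    rw [Finset.sum_range_succ] at shift
    simp only [zero_add, Nat.cast_add, Nat.cast_one, Nat.cast_zero] at h shift
    linarith [nonneg 0 le_rfl, peak N (Nat.cast_nonneg N)]
  have tail : ∑' i : ℕ, f ((i + N : ℕ) + 1) ≤ f μ + ∫ x in Ioi ((N + 1 : ℕ) : ℝ), f x := by
    have anti' : AntitoneOn f (Ici ((N + 1 : ℕ) : ℝ)) := anti.mono (Ici_subset_Ici.2 hμN)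
    have h := AntitoneOn.tsum_comp_add_le_integral (N + 1) anti'
      (integrable.mono_set (Ioi_subset_Ioi (Nat.cast_nonneg _)))
      fun x hx => nonneg x ((Nat.cast_nonneg _).trans (le_of_lt hx))
    rw [(summable_nat_add_iff N).2 summable |>.tsum_eq_zero_add]
    have shift : ∑' i : ℕ, f ((i + 1 + N : ℕ) + 1) = ∑' n : ℕ, f ((n + (N + 1) + 1 : ℕ)) :=
      tsum_congr fun i => by push_cast; ring_nf
    rw [shift]
    linarith [peak ((0 + N : ℕ) + 1) (by positivity)]
  have split : (∫ x in (0)..N, f x) + ∫ x in Ioi ((N + 1 : ℕ) : ℝ), f x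
      ≤ ∫ x in Ioi 0, f x := by
    have integrableN := integrable.mono_set (Ioi_subset_Ioi (Nat.cast_nonneg N))
    rw [← integral_interval_add_Ioi integrable integrableN]
    refine add_le_add le_rfl (setIntegral_mono_set integrableN
      (ae_restrict_of_forall_mem measurableSet_Ioi fun x hx =>
        nonneg x ((Nat.cast_nonneg N).trans (le_of_lt hx)))
      (Ioi_subset_Ioi (show (N : ℝ) ≤ ((N + 1 : ℕ) : ℝ) by push_cast; linarith)).eventuallyLE)
  linarith

lemma integral_le_tsum_add_of_monotoneOn_antitoneOn (hμ : 0 ≤ μ)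
    (mono : MonotoneOn f (Icc 0 μ)) (anti : AntitoneOn f (Ici μ))
    (nonneg : ∀ x, 0 ≤ x → 0 ≤ f x) (integrable : IntegrableOn f (Ioi 0)) :
    ∫ x in Ioi 0, f x ≤ ∑' n : ℕ, f (n + 1) + f μ := by
  set N := ⌊μ⌋₊
  have hNμ : (N : ℝ) ≤ μ := Nat.floor_le hμ
  have hμN : μ ≤ ((N + 1 : ℕ) : ℝ) := by push_cast; exact (Nat.lt_floor_add_one μ).le
  have peak : ∀ x, 0 ≤ x → f x ≤ f μ :=
    isMaxOn_iff.1 (isMaxOn_Ici_of_monotoneOn_antitoneOn hμ mono anti)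
  have summable : Summable fun n : ℕ => f n := summable_of_antitoneOn_Ici anti nonneg integrable
  have integrableOn {a : ℝ} (ha : 0 ≤ a) : IntegrableOn f (Ioi a) :=
    integrable.mono_set (Ioi_subset_Ioi ha)
  have split : ∫ x in Ioi 0, f x = (∫ x in (0)..N, f x)
      + (∫ x in (N : ℝ)..((N + 1 : ℕ) : ℝ), f x) + ∫ x in Ioi ((N + 1 : ℕ) : ℝ), f x := by
    rw [add_assoc, integral_interval_add_Ioi (integrableOn (Nat.cast_nonneg _))
        (integrableOn (Nat.cast_nonneg _)),
      integral_interval_add_Ioi integrable (integrableOn (Nat.cast_nonneg _))]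
  have head : ∫ x in (0)..N, f x ≤ ∑ i ∈ Finset.range N, f (i + 1) := by
    have h := (mono.mono (Icc_subset_Icc_right (by simpa using hNμ))).integral_le_sum (x₀ := 0)
    simpa using h
  have middle : ∫ x in (N : ℝ)..((N + 1 : ℕ) : ℝ), f x ≤ f μ := by
    have hN : (N : ℝ) ≤ ((N + 1 : ℕ) : ℝ) := by push_cast; linarith
    calc ∫ x in (N : ℝ)..((N + 1 : ℕ) : ℝ), f x ≤ ∫ x in (N : ℝ)..((N + 1 : ℕ) : ℝ), f μ :=
          integral_mono_on hN ((intervalIntegrable_iff_integrableOn_Ioc_of_le hN).2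
            ((integrableOn (Nat.cast_nonneg N)).mono_set Ioc_subset_Ioi_self))
            intervalIntegrable_const fun x hx => peak x ((Nat.cast_nonneg N).trans hx.1)
      _ = f μ := by simp
  have tail : ∫ x in Ioi ((N + 1 : ℕ) : ℝ), f x ≤ ∑' i : ℕ, f ((i + N : ℕ) + 1) := by
    have h := AntitoneOn.integral_le_tsum_comp_add (N + 1) (anti.mono (Ici_subset_Ici.2 hμN))
      summable fun x hx => nonneg x ((Nat.cast_nonneg _).trans (le_of_lt hx))
    convert h using 3 with i
    push_cast; ring_nf
  have summable' : Summable fun n : ℕ => f (n + 1) := by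
    simpa using (summable_nat_add_iff 1).2 summable
  rw [← summable'.sum_add_tsum_nat_add N]
  linarith

lemma abs_tsum_sub_integral_le_of_monotoneOn_antitoneOn (hμ : 0 ≤ μ)
    (mono : MonotoneOn f (Icc 0 μ)) (anti : AntitoneOn f (Ici μ))
    (nonneg : ∀ x, 0 ≤ x → 0 ≤ f x) (integrable : IntegrableOn f (Ioi 0)) :
    |∑' n : ℕ, f (n + 1) - ∫ x in Ioi 0, f x| ≤ 2 * f μ := by
  have upper := tsum_le_integral_add_of_monotoneOn_antitoneOn hμ mono anti nonneg integrable
  have lower := integral_le_tsum_add_of_monotoneOn_antitoneOn hμ mono anti nonneg integrable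
  rw [abs_sub_le_iff]
  constructor <;> linarith [nonneg μ hμ]

end Unimodal

lemma integral_comp_mul_add_Ioi (f : ℝ → ℝ) (a y : ℝ) {d : ℝ} (hd : 0 < d) :
    ∫ x in Ioi a, f (d * x + y) = d⁻¹ * ∫ x in Ioi (d * a + y), f x := by
  have translate := (measurePreserving_add_right volume y).setIntegral_preimage_emb
    (measurableEmbedding_addRight y) f (Ioi (d * a + y))
  rw [preimage_add_const_Ioi, add_sub_cancel_right] at translate
  rw [integral_comp_mul_left_Ioi (fun x => f (x + y)) a hd, smul_eq_mul, translate]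

lemma IntegrableOn.comp_mul_add_Ioi {f : ℝ → ℝ} {a y d : ℝ}
    (hf : IntegrableOn f (Ioi (d * a + y))) (hd : 0 < d) :
    IntegrableOn (fun x => f (d * x + y)) (Ioi a) := by
  have translate := (measurePreserving_add_right volume y).integrableOn_comp_preimage
    (measurableEmbedding_addRight y) (f := f) (s := Ioi (d * a + y))
  rw [preimage_add_const_Ioi, add_sub_cancel_right] at translate
  exact (integrableOn_Ioi_comp_mul_left_iff (fun x => f (x + y)) a hd).2 (translate.2 hf)

lemma mul_le_integral_Ioi_of_le_on_Ioc {f : ℝ → ℝ} {l a b c : ℝ} (hf : IntegrableOn f (Ioi l))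
    (hf0 : ∀ x ∈ Ioi l, 0 ≤ f x) (hla : l ≤ a) (hab : a ≤ b) (h : ∀ x ∈ Ioc a b, c ≤ f x) :
    (b - a) * c ≤ ∫ x in Ioi l, f x := by
  have hsub : Ioc a b ⊆ Ioi l := fun x hx => hla.trans_lt hx.1
  calc (b - a) * c = volume.real (Ioc a b) • c := by
        rw [Real.volume_real_Ioc_of_le hab, smul_eq_mul]
    _ ≤ ∫ x in Ioc a b, f x :=
        setIntegral_ge_of_const_le measurableSet_Ioc measure_Ioc_lt_top.ne h (hf.mono_set hsub)
    _ ≤ ∫ x in Ioi l, f x :=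
        setIntegral_mono_set hf (ae_restrict_of_forall_mem measurableSet_Ioi hf0)
          hsub.eventuallyLE

noncomputable def gammaKernel (θ t z : ℝ) : ℝ := z ^ (t - 1) * exp (-θ * z)

section GammaKernel

variable {θ t : ℝ}

lemma gammaKernel_nonneg (θ t : ℝ) {z : ℝ} (hz : 0 ≤ z) : 0 ≤ gammaKernel θ t z :=
  mul_nonneg (rpow_nonneg hz _) (exp_pos _).le

lemma gammaKernel_eq_exp (θ t : ℝ) {z : ℝ} (hz : 0 < z) :
    gammaKernel θ t z = exp ((t - 1) * log z - θ * z) := by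
  rw [gammaKernel, rpow_def_of_pos hz, ← exp_add]
  ring_nf

lemma integral_gammaKernel (hθ : 0 < θ) (ht : 0 < t) :
    ∫ z in Ioi 0, gammaKernel θ t z = Gamma t / θ ^ t := by
  simp_rw [gammaKernel, neg_mul]
  rw [integral_rpow_mul_exp_neg_mul_Ioi ht hθ, one_div, inv_rpow hθ.le, inv_mul_eq_div]

lemma integrableOn_gammaKernel (hθ : 0 < θ) (ht : 0 < t) :
    IntegrableOn (gammaKernel θ t) (Ioi 0) :=
  Integrable.of_integral_ne_zero <| by
    rw [integral_gammaKernel hθ ht]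
    exact (div_pos (Gamma_pos_of_pos ht) (rpow_pos_of_pos hθ t)).ne'

lemma gammaKernel_monotoneOn (hθ : 0 < θ) (ht : 1 < t) :
    MonotoneOn (gammaKernel θ t) (Icc 0 ((t - 1) / θ)) := by
  rintro a ⟨ha0, -⟩ b ⟨-, hbm⟩ hab
  rcases ha0.eq_or_lt with rfl | ha
  · rw [gammaKernel, zero_rpow (by linarith), zero_mul]
    exact gammaKernel_nonneg θ t hab
  have hb := ha.trans_le hab
  rw [gammaKernel_eq_exp θ t ha, gammaKernel_eq_exp θ t hb, exp_le_exp]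
  have hlog : 1 - a / b ≤ log b - log a := by
    simpa [← log_div hb.ne' ha.ne'] using one_sub_inv_le_log_of_pos (div_pos hb ha)
  have hθb : θ * b ≤ t - 1 := by rwa [le_div_iff₀ hθ, mul_comm] at hbm
  have key : θ * (b - a) ≤ (t - 1) * (1 - a / b) := by
    rw [one_sub_div hb.ne', mul_div_assoc', le_div_iff₀ hb]
    nlinarith
  nlinarith [mul_le_mul_of_nonneg_left hlog (by linarith : 0 ≤ t - 1)]

lemma gammaKernel_antitoneOn (hθ : 0 < θ) (ht : 1 < t) :
    AntitoneOn (gammaKernel θ t) (Ici ((t - 1) / θ)) := by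
  rintro a (hma : _ ≤ a) b - hab
  have ha : 0 < a := (div_pos (by linarith) hθ).trans_le hma
  have hb := ha.trans_le hab
  rw [gammaKernel_eq_exp θ t ha, gammaKernel_eq_exp θ t hb, exp_le_exp]
  have hlog : log b - log a ≤ b / a - 1 := by
    simpa [← log_div hb.ne' ha.ne'] using log_le_sub_one_of_pos (div_pos hb ha)
  have hθa : t - 1 ≤ θ * a := by rwa [div_le_iff₀ hθ, mul_comm] at hma
  have key : (t - 1) * (b / a - 1) ≤ θ * (b - a) := by
    rw [div_sub_one ha.ne', mul_div_assoc', div_le_iff₀ ha]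
    nlinarith
  nlinarith [mul_le_mul_of_nonneg_left hlog (by linarith : 0 ≤ t - 1)]

lemma mul_gammaKernel_peak_le_integral (hθ : 0 < θ) (ht : 1 < t) :
    √(t - 1) / θ * (gammaKernel θ t ((t - 1) / θ) * exp (-1)) ≤
      ∫ z in Ioi 0, gammaKernel θ t z := by
  set m := (t - 1) / θ with hm_def
  have hm : 0 < m := div_pos (by linarith) hθ
  have hθm : θ * m = t - 1 := by rw [hm_def]; field_simp
  have hw : 0 ≤ √(t - 1) / θ := by positivity
  have hw2 : θ * (√(t - 1) / θ) ^ 2 = m := by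
    rw [div_pow, sq_sqrt (by linarith), hm_def]; field_simp
  have := mul_le_integral_Ioi_of_le_on_Ioc (integrableOn_gammaKernel hθ (by linarith))
    (fun z hz => gammaKernel_nonneg θ t (le_of_lt hz)) hm.le (le_add_of_nonneg_right hw)
    (c := gammaKernel θ t m * exp (-1)) ?_
  · simpa using this
  rintro z ⟨hmz, hzw⟩
  have hz : 0 < z := hm.trans hmz
  rw [gammaKernel_eq_exp θ t hm, gammaKernel_eq_exp θ t hz, ← exp_add, exp_le_exp]
  have hlog : 1 - m / z ≤ log z - log m := by
    simpa [← log_div hz.ne' hm.ne'] using one_sub_inv_le_log_of_pos (div_pos hz hm)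
  -- since `t - 1 = θ m`, the exponent drops by at least `θ (z - m)² / z`, which is `≤ 1` here
  have hsq : θ * (z - m) ^ 2 ≤ z := by
    nlinarith [pow_le_pow_left₀ (by linarith : 0 ≤ z - m) (by linarith : z - m ≤ √(t - 1) / θ) 2]
  have key : -1 ≤ (t - 1) * (1 - m / z) - θ * (z - m) := by
    have : (t - 1) * (1 - m / z) - θ * (z - m) = -(θ * (z - m) ^ 2 / z) := by
      rw [← hθm]; field_simp; ring
    rw [this, neg_le_neg_iff]
    exact (div_le_one hz).2 hsq
  nlinarith [mul_le_mul_of_nonneg_left hlog (by linarith : 0 ≤ t - 1)]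

lemma intervalIntegral_gammaKernel_le_rpow (hθ : 0 < θ) (ht : 1 ≤ t) {y : ℝ} (hy : 0 ≤ y) :
    ∫ z in (0)..y, gammaKernel θ t z ≤ y ^ t := by
  calc ∫ z in (0)..y, gammaKernel θ t z ≤ ∫ z in (0)..y, y ^ (t - 1) := by
        refine integral_mono_on hy ?_ intervalIntegrable_const fun z hz => ?_
        · exact (intervalIntegrable_iff_integrableOn_Ioc_of_le hy).2
            ((integrableOn_gammaKernel hθ (by linarith)).mono_set Ioc_subset_Ioi_self)
        · calc gammaKernel θ t z ≤ z ^ (t - 1) * 1 :=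
                mul_le_mul_of_nonneg_left (exp_le_one_iff.2 (by nlinarith [hz.1]))
                  (rpow_nonneg hz.1 _)
            _ ≤ y ^ (t - 1) := by rw [mul_one]; exact rpow_le_rpow hz.1 hz.2 (by linarith)
    _ = y ^ t := by
        rw [intervalIntegral.integral_const, sub_zero, smul_eq_mul, mul_comm,
          ← rpow_add_one' hy (by linarith)]
        ring_nf

end GammaKernel

lemma rpow_mul_exp_le_Gamma {a t : ℝ} (ha : 0 < a) (ht : 1 ≤ t) :
    a ^ (t - 1) * exp (-(a + 1)) ≤ Gamma t := by
  have h := mul_le_integral_Ioi_of_le_on_Ioc (integrableOn_gammaKernel one_pos (by linarith))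
    (fun z hz => gammaKernel_nonneg 1 t (le_of_lt hz)) ha.le (le_add_of_nonneg_right zero_le_one)
    (c := a ^ (t - 1) * exp (-(a + 1))) fun z hz =>
      mul_le_mul (rpow_le_rpow ha.le hz.1.le (by linarith)) (exp_le_exp.2 (by linarith [hz.2]))
        (exp_pos _).le (rpow_nonneg (ha.trans hz.1).le _)
  rwa [integral_gammaKernel one_pos (by linarith), one_rpow, div_one, add_sub_cancel_left,
    one_mul] at h

lemma tendsto_rpow_div_Gamma_atTop {c : ℝ} (hc : 0 ≤ c) :
    Tendsto (fun t : ℝ => c ^ t / Gamma t) atTop (nhds 0) := by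
  set a := c + 1
  have ha : 0 < a := by positivity
  have geom : Tendsto (fun t : ℝ => a * exp (a + 1) * (c / a) ^ t) atTop (nhds 0) := by
    simpa using (tendsto_rpow_atTop_of_base_lt_one (c / a) (by linarith [div_nonneg hc ha.le])
      ((div_lt_one ha).2 (by linarith))).const_mul (a * exp (a + 1))
  refine squeeze_zero' ?_ ?_ geom
  · filter_upwards [eventually_gt_atTop 0] with t ht
    exact div_nonneg (rpow_nonneg hc t) (Gamma_pos_of_pos ht).le
  · filter_upwards [eventually_ge_atTop 1] with t ht
    calc c ^ t / Gamma t ≤ c ^ t / (a ^ (t - 1) * exp (-(a + 1))) :=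
          div_le_div_of_nonneg_left (rpow_nonneg hc t) (by positivity)
            (rpow_mul_exp_le_Gamma ha ht)
      _ = a * exp (a + 1) * (c / a) ^ t := by
          rw [div_rpow hc ha.le, rpow_sub_one ha.ne', exp_neg]
          field_simp

section Lattice

variable {θ t d y : ℝ}

lemma abs_mul_tsum_gammaKernel_sub_integral_le (hθ : 0 < θ) (hd : 0 < d) (hy : 0 ≤ y)
    (ht : 1 + θ * y < t) :
    |d * ∑' n : ℕ, gammaKernel θ t (d * (n + 1) + y)
        - ((∫ z in Ioi 0, gammaKernel θ t z) - ∫ z in (0)..y, gammaKernel θ t z)|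
      ≤ 2 * d * gammaKernel θ t ((t - 1) / θ) := by
  have ht1 : 1 < t := by linarith [mul_nonneg hθ.le hy]
  set m := (t - 1) / θ
  have hym : y ≤ m := by rw [le_div_iff₀ hθ]; linarith
  set μ := (m - y) / d
  have hμ : 0 ≤ μ := div_nonneg (by linarith) hd.le
  have hdμ : d * μ + y = m := by simp only [μ]; field_simp; ring
  have integrable := integrableOn_gammaKernel hθ (by linarith : 0 < t)
  have riemann := abs_tsum_sub_integral_le_of_monotoneOn_antitoneOn
    (f := fun x => gammaKernel θ t (d * x + y)) hμ
    (fun a ha b hb hab => gammaKernel_monotoneOn hθ ht1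
      ⟨by nlinarith [ha.1], by nlinarith [ha.2]⟩ ⟨by nlinarith [hb.1], by nlinarith [hb.2]⟩
      (by nlinarith))
    (fun a (ha : μ ≤ a) b (hb : μ ≤ b) hab => gammaKernel_antitoneOn hθ ht1
      (show m ≤ d * a + y by nlinarith) (show m ≤ d * b + y by nlinarith) (by nlinarith))
    (fun x hx => gammaKernel_nonneg θ t (by positivity))
    (IntegrableOn.comp_mul_add_Ioi (by simpa using integrable.mono_set (Ioi_subset_Ioi hy)) hd)
  have substitution : d * ∫ x in Ioi 0, gammaKernel θ t (d * x + y)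
      = (∫ z in Ioi 0, gammaKernel θ t z) - ∫ z in (0)..y, gammaKernel θ t z := by
    rw [integral_comp_mul_add_Ioi _ 0 y hd, mul_zero, zero_add, ← mul_assoc,
      mul_inv_cancel₀ hd.ne', one_mul,
      ← integral_interval_add_Ioi integrable (integrable.mono_set (Ioi_subset_Ioi hy))]
    ring
  rw [← substitution, ← mul_sub, abs_mul, abs_of_pos hd]
  simp only [hdμ] at riemann
  nlinarith

lemma abs_mul_tsum_gammaKernel_sub_one_le (hθ : 0 < θ) (hd : 0 < d) (hy : 0 ≤ y)
    (ht : 1 + θ * y < t) :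
    |d * θ ^ t / Gamma t * ∑' n : ℕ, gammaKernel θ t (d * (n + 1) + y) - 1|
      ≤ (θ * y) ^ t / Gamma t + 2 * d * (θ * exp 1 / √(t - 1)) := by
  have ht1 : 1 < t := by linarith [mul_nonneg hθ.le hy]
  have hΓ := Gamma_pos_of_pos (by linarith : 0 < t)
  have hθt := rpow_pos_of_pos hθ t
  have hsqrt : 0 < √(t - 1) := sqrt_pos.2 (by linarith)
  set I := ∫ z in Ioi 0, gammaKernel θ t z
  have hI : I = Gamma t / θ ^ t := integral_gammaKernel hθ (by linarith)
  have hIpos : 0 < I := hI ▸ div_pos hΓ hθt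
  have lattice := abs_mul_tsum_gammaKernel_sub_integral_le hθ hd hy ht
  have head := intervalIntegral_gammaKernel_le_rpow hθ ht1.le hy
  have head_nonneg : 0 ≤ ∫ z in (0)..y, gammaKernel θ t z :=
    integral_nonneg hy fun z hz => gammaKernel_nonneg θ t hz.1
  have peak : gammaKernel θ t ((t - 1) / θ) ≤ θ * exp 1 / √(t - 1) * I := by
    have h := mul_gammaKernel_peak_le_integral hθ ht1
    rw [exp_neg] at h
    rw [div_mul_eq_mul_div, le_div_iff₀ hsqrt]
    calc gammaKernel θ t ((t - 1) / θ) * √(t - 1)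
        = θ * exp 1 * (√(t - 1) / θ * (gammaKernel θ t ((t - 1) / θ) * (exp 1)⁻¹)) := by
          field_simp
      _ ≤ θ * exp 1 * I := by gcongr
  have head_eq : (θ * y) ^ t / Gamma t * I = y ^ t := by
    rw [hI, mul_rpow hθ.le hy]; field_simp
  rw [show d * θ ^ t / Gamma t * ∑' n : ℕ, gammaKernel θ t (d * (n + 1) + y) - 1
      = (d * ∑' n : ℕ, gammaKernel θ t (d * (n + 1) + y) - I) / I by rw [hI]; field_simp,
    abs_div, abs_of_pos hIpos, div_le_iff₀ hIpos, add_mul, head_eq]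
  rw [abs_le] at lattice ⊢
  constructor <;>
    nlinarith [lattice.1, lattice.2, mul_le_mul_of_nonneg_left peak (by linarith : 0 ≤ 2 * d)]

end Lattice

/-- For every `θ > 0` and `y ∈ [0, 2π]`, the tail sum of the Gamma density
sampled on the lattice `2πn + y`, `n ≥ 1`, normalized by `2π θ^t / Γ(t)`,
converges to `1` as the (real) shape parameter `t → ∞`. -/
theorem gamma_lattice_tail_sum_tendsto_one (θ y : ℝ) (hθ : 0 < θ)
    (hy : y ∈ Set.Icc (0 : ℝ) (2 * Real.pi)) :
    Tendsto
      (fun t : ℝ => (2 * Real.pi * θ ^ t / Real.Gamma t) *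
        ∑' n : ℕ, (2 * Real.pi * ((n : ℝ) + 1) + y) ^ (t - 1) *
          Real.exp (-θ * (2 * Real.pi * ((n : ℝ) + 1) + y)))
      atTop (nhds 1) := by
  have bound : Tendsto (fun t : ℝ => (θ * y) ^ t / Gamma t
      + 2 * (2 * π) * (θ * exp 1 / √(t - 1))) atTop (nhds 0) := by
    have inv_sqrt : Tendsto (fun t : ℝ => θ * exp 1 / √(t - 1)) atTop (nhds 0) :=
      tendsto_const_nhds.div_atTop
        (tendsto_sqrt_atTop.comp (tendsto_atTop_add_const_right _ (-1) tendsto_id))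
    simpa using (tendsto_rpow_div_Gamma_atTop (mul_nonneg hθ.le hy.1)).add
      (inv_sqrt.const_mul (2 * (2 * π)))
  rw [tendsto_iff_norm_sub_tendsto_zero]
  refine squeeze_zero' (Eventually.of_forall fun t => norm_nonneg _) ?_ bound
  filter_upwards [eventually_gt_atTop (1 + θ * y)] with t ht
  exact abs_mul_tsum_gammaKernel_sub_one_le hθ two_pi_pos hy.1 ht
end

section
/- Lévy–Khintchine exponent of the symmetric Gamma jump measure: for every θ > 0 and every p ∈ ℝ, the function y ↦ (e^{ipy} − 1 − i·p·y·1_{{|y| ≤ 1}}) · e^{−θ|y|}/|y| is absolutely integrable on ℝ \ {0} and ∫_{ℝ\{0}} (e^{ipy} − 1 − i·p·y·1_{{|y| ≤ 1}}) · (e^{−θ|y|}/|y|) dy = −ln(1 + p²/θ²). In particular this exponent is real and strictly negative for p ≠ 0. -/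
/-!
Pairing `y` with `-y` cancels both the compensator `i p y 1_{|y| ≤ 1}` and the sine part of
`e^{ipy}`, so the exponent is `-2 ∫₀^∞ (1 - cos (p t)) e^{-θt} / t dt`; the integrand is dominated
by a multiple of `e^{-θ|y|}`, which gives absolute integrability. Differentiating under the
integral sign in `p` turns this Frullani-type integral into the Laplace transform
`∫₀^∞ e^{-θt} sin (p t) dt = Im (1 / (θ - i p)) = p / (θ² + p²)`, whose primitive vanishing at
`p = 0` is `½ log (1 + p² / θ²)`.
-/

open MeasureTheory Filter Real Set

lemma integrable_exp_neg_mul_abs {θ : ℝ} (hθ : 0 < θ) :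
    Integrable (fun y : ℝ => exp (-θ * |y|)) := by
  rw [← integrableOn_univ, ← Iic_union_Ioi (a := (0 : ℝ)), integrableOn_union]
  constructor
  · refine (integrableOn_exp_mul_Iic hθ 0).congr_fun (fun y hy => ?_) measurableSet_Iic
    rw [abs_of_nonpos hy]; ring_nf
  · refine (integrableOn_exp_mul_Ioi (neg_lt_zero.2 hθ) 0).congr_fun (fun y hy => ?_)
      measurableSet_Ioi
    rw [abs_of_pos hy]

lemma integral_eq_integral_Ioi_add_comp_neg {E : Type*} [NormedAddCommGroup E] [NormedSpace ℝ E]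
    {g : ℝ → E} (hg : Integrable g) : ∫ y, g y = ∫ y in Ioi 0, (g y + g (-y)) := by
  rw [integral_add hg.integrableOn hg.comp_neg.integrableOn, integral_comp_neg_Ioi, neg_zero,
    add_comm, intervalIntegral.integral_Iic_add_Ioi hg.integrableOn hg.integrableOn]

lemma integral_exp_neg_mul_mul_sin_Ioi {θ : ℝ} (hθ : 0 < θ) (s : ℝ) :
    ∫ t in Ioi 0, exp (-θ * t) * sin (s * t) = s / (θ ^ 2 + s ^ 2) := by
  have hre : (-θ + s * Complex.I).re < 0 := by simpa using hθ
  have h := integral_im (𝕜 := ℂ) (integrableOn_exp_mul_complex_Ioi hre 0)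
  rw [integral_exp_mul_complex_Ioi hre 0] at h
  convert h using 1
  · congr 1 with t
    simp [Complex.exp_im]
  · have : θ ^ 2 + s ^ 2 ≠ 0 := by positivity
    simp [Complex.div_im, Complex.normSq]
    field_simp

lemma integrableOn_one_sub_cos_mul_exp_neg_div_Ioi {θ : ℝ} (hθ : 0 < θ) (s : ℝ) :
    IntegrableOn (fun t => (1 - cos (s * t)) * exp (-θ * t) / t) (Ioi 0) := by
  refine Integrable.mono' ((exp_neg_integrableOn_Ioi 0 hθ).const_mul |s|)
    (Measurable.aestronglyMeasurable (by fun_prop)) ?_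
  filter_upwards [ae_restrict_mem measurableSet_Ioi] with t (ht : 0 < t)
  have hcos : |1 - cos (s * t)| ≤ |s| * t := by
    simpa [abs_sub_comm, abs_mul, abs_of_pos ht] using abs_cos_sub_cos_le (s * t) 0
  rw [norm_div, norm_mul, Real.norm_eq_abs, Real.norm_of_nonneg (exp_pos _).le,
    Real.norm_of_nonneg ht.le, div_le_iff₀ ht]
  calc |1 - cos (s * t)| * exp (-θ * t) ≤ |s| * t * exp (-θ * t) := by gcongr
    _ = |s| * exp (-θ * t) * t := by ring

lemma hasDerivAt_integral_one_sub_cos_mul_exp_neg_div {θ : ℝ} (hθ : 0 < θ) (s : ℝ) :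
    HasDerivAt (fun s => ∫ t in Ioi 0, (1 - cos (s * t)) * exp (-θ * t) / t)
      (s / (θ ^ 2 + s ^ 2)) s := by
  have hderiv : ∀ᵐ t ∂(volume.restrict (Ioi 0)), ∀ x ∈ Metric.ball s 1,
      HasDerivAt (fun s => (1 - cos (s * t)) * exp (-θ * t) / t)
        (exp (-θ * t) * sin (x * t)) x := by
    filter_upwards [ae_restrict_mem measurableSet_Ioi] with t (ht : 0 < t) x _
    refine ((((hasDerivAt_mul_const (x := x) t).cos.const_sub 1).mul_const
      (exp (-θ * t))).div_const t).congr_deriv ?_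
    field_simp
  have hbound : ∀ᵐ t ∂(volume.restrict (Ioi 0)), ∀ x ∈ Metric.ball s 1,
      ‖exp (-θ * t) * sin (x * t)‖ ≤ exp (-θ * t) := by
    refine ae_of_all _ fun t x _ => ?_
    rw [norm_mul, Real.norm_of_nonneg (exp_pos _).le]
    exact mul_le_of_le_one_right (exp_pos _).le (abs_sin_le_one _)
  have h := (hasDerivAt_integral_of_dominated_loc_of_deriv_le
    (F := fun s t => (1 - cos (s * t)) * exp (-θ * t) / t) (Metric.ball_mem_nhds s one_pos)
    (Eventually.of_forall fun s => Measurable.aestronglyMeasurable (by fun_prop))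
    (integrableOn_one_sub_cos_mul_exp_neg_div_Ioi hθ s)
    (Measurable.aestronglyMeasurable (by fun_prop)) hbound
    (exp_neg_integrableOn_Ioi 0 hθ) hderiv).2
  rwa [integral_exp_neg_mul_mul_sin_Ioi hθ] at h

lemma integral_one_sub_cos_mul_exp_neg_div_Ioi {θ : ℝ} (hθ : 0 < θ) (p : ℝ) :
    ∫ t in Ioi 0, (1 - cos (p * t)) * exp (-θ * t) / t = log (1 + p ^ 2 / θ ^ 2) / 2 := by
  have hlog (s : ℝ) :
      HasDerivAt (fun s => log (θ ^ 2 + s ^ 2) / 2) (s / (θ ^ 2 + s ^ 2)) s := by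
    refine ((((hasDerivAt_pow 2 s).const_add (θ ^ 2)).log (by positivity)).div_const 2)
      |>.congr_deriv ?_
    field_simp
    ring
  have hdiff (s : ℝ) := (hasDerivAt_integral_one_sub_cos_mul_exp_neg_div hθ s).sub (hlog s)
  have hconst := is_const_of_deriv_eq_zero (fun s => (hdiff s).differentiableAt)
    (fun s => by simpa using (hdiff s).deriv) p 0
  simp only [Pi.sub_apply, zero_mul, cos_zero, sub_self, zero_div, integral_zero, ne_eq,
    OfNat.ofNat_ne_zero, not_false_eq_true, zero_pow, add_zero] at hconst
  rw [one_add_div (by positivity), log_div (by positivity) (by positivity)]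
  linarith

noncomputable def gammaLevyIntegrand (θ p y : ℝ) : ℂ :=
  (Complex.exp (Complex.I * p * y) - 1 - Complex.I * p * y * (if |y| ≤ 1 then (1 : ℂ) else 0)) *
    ((exp (-θ * |y|) / |y| : ℝ) : ℂ)

lemma measurable_gammaLevyIntegrand (θ p : ℝ) : Measurable (gammaLevyIntegrand θ p) := by
  have hcutoff : Measurable fun y : ℝ => if |y| ≤ 1 then (1 : ℂ) else 0 :=
    Measurable.ite (measurableSet_le (by fun_prop) measurable_const) measurable_const
      measurable_const
  unfold gammaLevyIntegrand
  fun_prop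

lemma norm_gammaLevyIntegrand_le (θ p y : ℝ) :
    ‖gammaLevyIntegrand θ p y‖ ≤ 2 * (|p| + 1) * exp (-θ * |y|) := by
  rcases eq_or_ne y 0 with rfl | hy
  · simp [gammaLevyIntegrand]; positivity
  have hphase : Complex.I * p * y = Complex.I * ((p * y : ℝ) : ℂ) := by push_cast; ring
  have hexp : ‖Complex.exp (Complex.I * p * y) - 1‖ ≤ |p| * |y| := by
    simpa [hphase, abs_mul] using Real.norm_exp_I_mul_ofReal_sub_one_le (x := p * y)
  rw [gammaLevyIntegrand, norm_mul, Complex.norm_real, Real.norm_of_nonneg (by positivity)]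
  split_ifs with hsmall
  · have hlin : ‖Complex.I * p * y‖ = |p| * |y| := by simp [hphase]
    calc ‖Complex.exp (Complex.I * p * y) - 1 - Complex.I * p * y * 1‖ * (exp (-θ * |y|) / |y|)
        ≤ (|p| * |y| + |p| * |y|) * (exp (-θ * |y|) / |y|) := by
          gcongr
          rw [mul_one]
          exact (norm_sub_le _ _).trans (add_le_add hexp hlin.le)
      _ ≤ 2 * (|p| + 1) * exp (-θ * |y|) := by
          field_simp
          nlinarith [exp_pos (-θ * |y|)]
  · have hbdd : ‖Complex.exp (Complex.I * p * y) - 1‖ ≤ 2 := by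
      refine (norm_sub_le _ _).trans ?_
      rw [hphase, Complex.norm_exp_I_mul_ofReal, norm_one]; norm_num
    calc ‖Complex.exp (Complex.I * p * y) - 1 - Complex.I * p * y * 0‖ * (exp (-θ * |y|) / |y|)
        ≤ 2 * exp (-θ * |y|) := by
          rw [mul_zero, sub_zero]
          gcongr
          exact div_le_self (exp_pos _).le (not_le.1 hsmall).le
      _ ≤ 2 * (|p| + 1) * exp (-θ * |y|) := by
          gcongr; linarith [abs_nonneg p]

lemma integrable_gammaLevyIntegrand {θ : ℝ} (hθ : 0 < θ) (p : ℝ) :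
    Integrable (gammaLevyIntegrand θ p) :=
  ((integrable_exp_neg_mul_abs hθ).const_mul _).mono'
    (measurable_gammaLevyIntegrand θ p).aestronglyMeasurable
    (ae_of_all _ (norm_gammaLevyIntegrand_le θ p))

lemma gammaLevyIntegrand_add_neg (θ p : ℝ) {y : ℝ} (hy : 0 < y) :
    gammaLevyIntegrand θ p y + gammaLevyIntegrand θ p (-y) =
      ((-2 * ((1 - cos (p * y)) * exp (-θ * y) / y) : ℝ) : ℂ) := by
  have hcos : Complex.exp (Complex.I * p * y) + Complex.exp (Complex.I * p * -y) =
      2 * Complex.cos (p * y) := by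
    rw [Complex.two_cos]; ring_nf
  rw [show -2 * ((1 - cos (p * y)) * exp (-θ * y) / y) =
    -2 * (1 - cos (p * y)) * (exp (-θ * y) / y) by ring]
  simp only [gammaLevyIntegrand, abs_neg, abs_of_pos hy, Complex.ofReal_mul, Complex.ofReal_neg,
    Complex.ofReal_sub, Complex.ofReal_one, Complex.ofReal_cos, Complex.ofReal_ofNat]
  linear_combination ((exp (-θ * y) / y : ℝ) : ℂ) * hcos

lemma integral_gammaLevyIntegrand {θ : ℝ} (hθ : 0 < θ) (p : ℝ) :
    ∫ y, gammaLevyIntegrand θ p y = ((-log (1 + p ^ 2 / θ ^ 2) : ℝ) : ℂ) := by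
  rw [integral_eq_integral_Ioi_add_comp_neg (integrable_gammaLevyIntegrand hθ p),
    setIntegral_congr_fun measurableSet_Ioi fun y hy => gammaLevyIntegrand_add_neg θ p hy,
    integral_complex_ofReal, integral_const_mul, integral_one_sub_cos_mul_exp_neg_div_Ioi hθ]
  ring_nf

/-- Lévy–Khintchine exponent of the symmetric Gamma jump measure: for every
`θ > 0` and `p ∈ ℝ`, the integrand of the Lévy–Khintchine formula with respect
to the jump measure `ν(dy) = e^{-θ|y|}/|y| dy` is absolutely integrable on
`ℝ \ {0}`, the integral equals `- log (1 + p²/θ²)`, and in particular this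
exponent is (real and) strictly negative for `p ≠ 0`. -/
theorem gamma_levy_khintchine_exponent (θ p : ℝ) (hθ : 0 < θ) :
    IntegrableOn
      (fun y : ℝ =>
        (Complex.exp (Complex.I * (p : ℂ) * (y : ℂ)) - 1 -
            Complex.I * (p : ℂ) * (y : ℂ) * (if |y| ≤ 1 then (1 : ℂ) else 0)) *
          ((Real.exp (-θ * |y|) / |y| : ℝ) : ℂ))
      ({(0 : ℝ)}ᶜ) ∧
    (∫ y in ({(0 : ℝ)}ᶜ),
        (Complex.exp (Complex.I * (p : ℂ) * (y : ℂ)) - 1 -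
            Complex.I * (p : ℂ) * (y : ℂ) * (if |y| ≤ 1 then (1 : ℂ) else 0)) *
          ((Real.exp (-θ * |y|) / |y| : ℝ) : ℂ)) =
      ((-Real.log (1 + p ^ 2 / θ ^ 2) : ℝ) : ℂ) ∧
    (p ≠ 0 → -Real.log (1 + p ^ 2 / θ ^ 2) < 0) := by
  refine ⟨?_, ?_, fun hp => ?_⟩
  · exact (integrable_gammaLevyIntegrand hθ p).integrableOn
  · rw [restrict_compl_singleton]
    exact integral_gammaLevyIntegrand hθ p
  · exact neg_neg_of_pos (log_pos (lt_add_of_pos_right 1 (by positivity)))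
end

section
/- Let θ > 0 and let Z be a symmetric Gamma-type process as in the context, and set C = ln(1 + 4/θ²). Then for every t > 0, E[ (1/t) ∫_0^t cos²(Z_s) ds ] = 1/2 + (1 − e^{−Ct})/(2Ct); in particular the time-averaged mean converges to 1/2 as t → ∞. -/
/-!
Since `Z₀ = 0`, the characteristic function at `u = 2` gives `E[e^{2iZ_s}] = e^{-Cs}`, so
`E[cos² Z_s] = 1/2 + E[cos 2Z_s]/2 = 1/2 + e^{-Cs}/2`. As `cos²` is bounded, Fubini lets the
expectation pass under the time integral, and integrating `1/2 + e^{-Cs}/2` over `[0, t]` gives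
the formula, whose correction term is `O(1/t)`.
-/

open MeasureTheory Filter Real ProbabilityTheory

section

variable {Ω : Type*} [MeasurableSpace Ω] {μ : Measure Ω}

lemma integral_cos_mul_eq_re_integral_exp [IsFiniteMeasure μ] {X : Ω → ℝ}
    (hX : AEMeasurable X μ) (u : ℝ) :
    ∫ ω, cos (u * X ω) ∂μ = (∫ ω, Complex.exp (Complex.I * u * X ω) ∂μ).re := by
  have hrot : ∀ ω, Complex.I * u * X ω = ((u * X ω : ℝ) : ℂ) * Complex.I := fun ω => by
    push_cast; ring
  have hint : Integrable (fun ω => Complex.exp (Complex.I * u * X ω)) μ := by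
    refine .of_bound (by fun_prop) 1 (ae_of_all _ fun ω => ?_)
    rw [hrot, Complex.norm_exp_ofReal_mul_I]
  rw [← RCLike.re_to_complex, ← integral_re hint]
  simp only [RCLike.re_to_complex, hrot, Complex.exp_ofReal_mul_I_re]

lemma integral_cos_sq_eq_half_add [IsProbabilityMeasure μ] {X : Ω → ℝ}
    (hX : AEMeasurable X μ) :
    ∫ ω, cos (X ω) ^ 2 ∂μ = 1 / 2 + (∫ ω, cos (2 * X ω) ∂μ) / 2 := by
  have hint : Integrable (fun ω => cos (2 * X ω)) μ :=
    .of_bound (by fun_prop) 1 (ae_of_all _ fun ω => by simpa using abs_cos_le_one _)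
  simp_rw [cos_sq]
  rw [integral_add (integrable_const _) (hint.div_const 2), integral_const, integral_div]
  simp

lemma integral_intervalIntegral_swap_of_norm_le {E : Type*} [NormedAddCommGroup E]
    [NormedSpace ℝ E] [IsFiniteMeasure μ] {F : ℝ → Ω → E}
    (hF : StronglyMeasurable (Function.uncurry F)) {M : ℝ} (hM : ∀ s ω, ‖F s ω‖ ≤ M)
    (a b : ℝ) :
    ∫ ω, (∫ s in a..b, F s ω) ∂μ = ∫ s in a..b, ∫ ω, F s ω ∂μ := by
  have : IsFiniteMeasure (volume.restrict (Set.uIoc a b)) :=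
    isFiniteMeasure_restrict.2 measure_Ioc_lt_top.ne
  refine (intervalIntegral_integral_swap ?_).symm
  exact .of_bound hF.aestronglyMeasurable M (ae_of_all _ fun p => hM p.1 p.2)

end

lemma integral_exp_neg_mul {C : ℝ} (hC : C ≠ 0) (t : ℝ) :
    ∫ s in (0 : ℝ)..t, exp (-C * s) = (1 - exp (-C * t)) / C := by
  rw [intervalIntegral.integral_comp_mul_left (fun s => exp s) (neg_ne_zero.2 hC), integral_exp]
  simp only [smul_eq_mul, mul_zero, exp_zero]
  field_simp
  ring

lemma integral_half_add_exp_neg_mul_div_two {C : ℝ} (hC : C ≠ 0) (t : ℝ) :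
    ∫ s in (0 : ℝ)..t, (1 / 2 + exp (-C * s) / 2) = t / 2 + (1 - exp (-C * t)) / (2 * C) := by
  rw [intervalIntegral.integral_add intervalIntegrable_const
      ((by fun_prop : Continuous fun s => exp (-C * s) / 2).intervalIntegrable _ _),
    intervalIntegral.integral_const, intervalIntegral.integral_div, integral_exp_neg_mul hC]
  field_simp
  ring

lemma tendsto_one_sub_exp_neg_mul_div_atTop {C D : ℝ} (hC : 0 < C) (hD : 0 < D) :
    Tendsto (fun t => (1 - exp (-C * t)) / (D * t)) atTop (nhds 0) := by
  have hexp : Tendsto (fun t => exp (-C * t)) atTop (nhds 0) := by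
    simpa [Function.comp_def, neg_mul] using
      tendsto_exp_neg_atTop_nhds_zero.comp (tendsto_id.const_mul_atTop hC)
  simpa using (hexp.const_sub 1).div_atTop (tendsto_id.const_mul_atTop hD)

theorem gamma_rotation_time_average_mean_general
    (Ω : Type*) [MeasurableSpace Ω] (μ : Measure Ω) [IsProbabilityMeasure μ]
    (θ : ℝ) (hθ : 0 < θ) (Z : ℝ → Ω → ℝ)
    (hZmeas : Measurable (Function.uncurry Z))
    (hZ0 : ∀ᵐ ω ∂μ, Z 0 ω = 0)
    (hchar : ∀ (u s σ : ℝ), 0 ≤ s → s ≤ σ →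
      (∫ ω, Complex.exp (Complex.I * (u : ℂ) * ((Z σ ω - Z s ω : ℝ) : ℂ)) ∂μ) =
        (((1 + u ^ 2 / θ ^ 2) ^ (-(σ - s)) : ℝ) : ℂ)) :
    (∀ t : ℝ, 0 < t →
      (∫ ω, (1 / t) * (∫ s in (0 : ℝ)..t, (Real.cos (Z s ω)) ^ 2) ∂μ) =
        1 / 2 + (1 - Real.exp (-(Real.log (1 + 4 / θ ^ 2)) * t)) /
          (2 * Real.log (1 + 4 / θ ^ 2) * t)) ∧
    Tendsto
      (fun t : ℝ => ∫ ω, (1 / t) * (∫ s in (0 : ℝ)..t, (Real.cos (Z s ω)) ^ 2) ∂μ)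
      atTop (nhds (1 / 2)) := by
  set C := Real.log (1 + 4 / θ ^ 2)
  have hC : 0 < C := Real.log_pos (lt_add_of_pos_right 1 (by positivity))
  have hmean : ∀ s, 0 ≤ s → ∫ ω, cos (Z s ω) ^ 2 ∂μ = 1 / 2 + exp (-C * s) / 2 := by
    intro s hs
    have hZs : AEMeasurable (Z s) μ := (hZmeas.comp measurable_prodMk_left).aemeasurable
    have hexp : ∫ ω, Complex.exp (Complex.I * (2 : ℝ) * Z s ω) ∂μ = ((exp (-C * s) : ℝ) : ℂ) := by
      have hrpow : (1 + (2 : ℝ) ^ 2 / θ ^ 2) ^ (-(s - 0)) = exp (-C * s) := by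
        rw [rpow_def_of_pos (by positivity)]
        norm_num [C]
      rw [← hrpow, ← hchar 2 0 s le_rfl hs]
      refine integral_congr_ae (hZ0.mono fun ω hω => ?_)
      simp [hω]
    rw [integral_cos_sq_eq_half_add hZs, integral_cos_mul_eq_re_integral_exp hZs, hexp,
      Complex.ofReal_re]
  have hmain : ∀ t, 0 < t → ∫ ω, (1 / t) * (∫ s in (0 : ℝ)..t, cos (Z s ω) ^ 2) ∂μ =
      1 / 2 + (1 - exp (-C * t)) / (2 * C * t) := by
    intro t ht
    have hbound : ∀ s ω, ‖cos (Z s ω) ^ 2‖ ≤ 1 := fun s ω => by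
      simpa using cos_sq_le_one (Z s ω)
    rw [integral_const_mul, integral_intervalIntegral_swap_of_norm_le
      ((continuous_cos.measurable.comp hZmeas).pow_const 2).stronglyMeasurable hbound,
      intervalIntegral.integral_congr (g := fun s => 1 / 2 + exp (-C * s) / 2)
        fun s hs => hmean s (Set.uIcc_of_le ht.le ▸ hs).1,
      integral_half_add_exp_neg_mul_div_two hC.ne']
    field_simp
  refine ⟨hmain, ?_⟩
  have hlim := (tendsto_one_sub_exp_neg_mul_div_atTop hC (mul_pos two_pos hC)).const_add (1 / 2)
  rw [add_zero] at hlim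
  exact hlim.congr' (eventually_gt_atTop 0 |>.mono fun t ht => (hmain t ht).symm)

/-- For a symmetric Gamma-type process `Z` (with `Z₀ = 0` a.s., independent
increments, and characteristic function
`E[e^{iu(Z_σ - Z_s)}] = (1 + u²/θ²)^{-(σ-s)}`), setting `C = log (1 + 4/θ²)`,
one has `E[(1/t) ∫₀ᵗ cos²(Z_s) ds] = 1/2 + (1 - e^{-Ct})/(2Ct)` for every
`t > 0`; in particular the time-averaged mean converges to `1/2` as
`t → ∞`. -/
theorem gamma_rotation_time_average_mean
    (Ω : Type*) [MeasurableSpace Ω] (μ : Measure Ω) [IsProbabilityMeasure μ]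
    (θ : ℝ) (hθ : 0 < θ) (Z : ℝ → Ω → ℝ)
    (hZmeas : Measurable (Function.uncurry Z))
    (hZ0 : ∀ᵐ ω ∂μ, Z 0 ω = 0)
    (hindep : ∀ s σ : ℝ, 0 ≤ s → s ≤ σ →
      IndepFun (fun ω => Z σ ω - Z s ω) (Z s) μ)
    (hchar : ∀ (u s σ : ℝ), 0 ≤ s → s ≤ σ →
      (∫ ω, Complex.exp (Complex.I * (u : ℂ) * ((Z σ ω - Z s ω : ℝ) : ℂ)) ∂μ) =
        (((1 + u ^ 2 / θ ^ 2) ^ (-(σ - s)) : ℝ) : ℂ)) :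
    (∀ t : ℝ, 0 < t →
      (∫ ω, (1 / t) * (∫ s in (0 : ℝ)..t, (Real.cos (Z s ω)) ^ 2) ∂μ) =
        1 / 2 + (1 - Real.exp (-(Real.log (1 + 4 / θ ^ 2)) * t)) /
          (2 * Real.log (1 + 4 / θ ^ 2) * t)) ∧
    Tendsto
      (fun t : ℝ => ∫ ω, (1 / t) * (∫ s in (0 : ℝ)..t, (Real.cos (Z s ω)) ^ 2) ∂μ)
      atTop (nhds (1 / 2)) :=
  gamma_rotation_time_average_mean_general Ω μ θ hθ Z hZmeas hZ0 hchar
end
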